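/- Graviton–spinor cancellation identity: in the Clifford algebra Cl of the Minkowski quadratic form on ℝ⁴, for all q₁, q₂, v ∈ ℝ⁴ and m ∈ ℝ, the following identity holds: −2·η(q₁+q₂, v)·(q̸₁ − q̸₂ − 2m) + η(q₁−q₂, v)·(q̸₁ + q̸₂) + (Q(q₁) − Q(q₂))·v̸ = (q̸₁ − m)·((−2·η(q₁+q₂,v) + η(q₁−q₂,v))·1 + (q̸₁ + m)·v̸) + (q̸₂ + m)·((2·η(q₁+q₂,v) + η(q₁−q₂,v))·1 − (q̸₂ − m)·v̸). In particular, on the mass shell Q(q₁) = Q(q₂) = m², the momentum-conservation-reduced longitudinal contraction of the graviton–spinor vertex decomposes as a left multiple of (q̸₁ − m) plus a left multiple of (q̸₂ + m), and therefore vanishes between on-shell Dirac spinors. -/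
import Mathlib


noncomputable section

/-- The Minkowski quadratic form on `ℝ⁴`: `Q(x) = x₀² − x₁² − x₂² − x₃²`. -/
def Qmink : QuadraticForm ℝ (Fin 4 → ℝ) :=
  QuadraticMap.weightedSumSquares ℝ ![(1 : ℝ), -1, -1, -1]

/-- The Clifford algebra of the Minkowski quadratic form. -/
abbrev Cl : Type := CliffordAlgebra Qmink

/-- Feynman slash: the canonical linear embedding `ℝ⁴ → Cl`. -/
def slash (x : Fin 4 → ℝ) : Cl := CliffordAlgebra.ι Qmink x

/-- The symmetric bilinear form `η` associated to `Q`, so that `Q(x) = η(x,x)` and the polar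
form of `Q` is `2η`. -/
def ηb (x y : Fin 4 → ℝ) : ℝ := x 0 * y 0 - x 1 * y 1 - x 2 * y 2 - x 3 * y 3

/-- Graviton–spinor cancellation identity: the momentum-conservation-reduced longitudinal
contraction of the graviton–spinor vertex decomposes as a left multiple of `(q̸₁ − m)` plus a
left multiple of `(q̸₂ + m)`, hence vanishes between on-shell Dirac spinors. -/
theorem graviton_spinor_cancellation (q₁ q₂ v : Fin 4 → ℝ) (m : ℝ) :
    (-2 * ηb (q₁ + q₂) v) • (slash q₁ - slash q₂ - algebraMap ℝ Cl (2 * m))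
        + ηb (q₁ - q₂) v • (slash q₁ + slash q₂)
        + (Qmink q₁ - Qmink q₂) • slash v
      = (slash q₁ - algebraMap ℝ Cl m) *
            (algebraMap ℝ Cl (-2 * ηb (q₁ + q₂) v + ηb (q₁ - q₂) v)
              + (slash q₁ + algebraMap ℝ Cl m) * slash v)
          + (slash q₂ + algebraMap ℝ Cl m) *
            (algebraMap ℝ Cl (2 * ηb (q₁ + q₂) v + ηb (q₁ - q₂) v)
              - (slash q₂ - algebraMap ℝ Cl m) * slash v) := by
  have h1 : slash q₁ * slash q₁ = Qmink q₁ • (1 : Cl) := by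
    rw [slash, CliffordAlgebra.ι_sq_scalar, Algebra.algebraMap_eq_smul_one]
  have h2 : slash q₂ * slash q₂ = Qmink q₂ • (1 : Cl) := by
    rw [slash, CliffordAlgebra.ι_sq_scalar, Algebra.algebraMap_eq_smul_one]
  simp only [Algebra.algebraMap_eq_smul_one, mul_add, add_mul, mul_sub, sub_mul,
    smul_mul_assoc, mul_smul_comm, one_mul, mul_one, smul_smul, smul_add, smul_sub, ← mul_assoc, h1, h2]
  simp only [ηb, Pi.add_apply, Pi.sub_apply]
  match_scalars <;> ring
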